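/- Let α, β, γ be pairwise orthonormal vectors in ℝ⁸. Then the 2-form identity ι_γ(ι_α Ψ₀) = ι_α(ι_γ τ_β) + (ι_γ ι_β ι_α Ψ₀) ∧ β^# holds on ℝ⁸; that is, ω_{αγ} = α⌟Im Ω_{βγ} + (γ⌟ω_{αβ})∧β^# (Proposition 12(iii)), expressing the symplectic form of the Calabi–Yau X_{αγ} in terms of the structures of X_{βγ} and X_{αβ}. -/
import Mathlib


open scoped RealInnerProductSpace

noncomputable section

/-- `W8` is ℝ⁸ with its Euclidean inner product. -/
abbrev W8 : Type := EuclideanSpace ℝ (Fin 8)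

/-- Evaluation of the wedge product `eⁱ ∧ eʲ ∧ eᵏ ∧ eˡ` of dual basis 1-forms of ℝ⁸. -/
def e4 (i j k l : Fin 8) (u v w z : W8) : ℝ :=
  Matrix.det !![u i, u j, u k, u l; v i, v j, v k, v l;
                w i, w j, w k, w l; z i, z j, z k, z l]

/-- The standard Spin(7) 4-form Ψ₀ = e¹²³⁴+e⁵⁶⁷⁸+e¹²⁵⁶−e¹²⁷⁸−e³⁴⁵⁶+e³⁴⁷⁸
+e¹³⁵⁷+e¹³⁶⁸+e²⁴⁵⁷+e²⁴⁶⁸+e¹⁴⁵⁸−e¹⁴⁶⁷−e²³⁵⁸+e²³⁶⁷ (0-indexed). -/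
def Psi0 (u v w z : W8) : ℝ :=
  e4 0 1 2 3 u v w z + e4 4 5 6 7 u v w z + e4 0 1 4 5 u v w z - e4 0 1 6 7 u v w z
    - e4 2 3 4 5 u v w z + e4 2 3 6 7 u v w z + e4 0 2 4 6 u v w z + e4 0 2 5 7 u v w z
    + e4 1 3 4 6 u v w z + e4 1 3 5 7 u v w z + e4 0 3 4 7 u v w z - e4 0 3 5 6 u v w z
    - e4 1 2 4 7 u v w z + e4 1 2 5 6 u v w z

/-- The dual 1-form γ^# = ⟨γ,·⟩ of a vector γ ∈ ℝ⁸. -/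
def sharpW (γ : W8) : W8 → ℝ := fun a => ⟪γ, a⟫

/-- Pointwise evaluation of the wedge (1-form) ∧ (3-form) on four vectors of ℝ⁸. -/
def wedge13W (f : W8 → ℝ) (C : W8 → W8 → W8 → ℝ) (a b c d : W8) : ℝ :=
  f a * C b c d - f b * C a c d + f c * C a b d - f d * C a b c

/-- For a unit vector γ, τ_γ = γ^# ∧ (ι_γΨ₀) − Ψ₀ is the 4-form representing the Hodge
dual ∗₇φ_γ of the induced G₂ form φ_γ = ι_γΨ₀ within the hyperplane γ⊥. -/
def tau (γ : W8) (a b c d : W8) : ℝ :=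
  wedge13W (sharpW γ) (fun x y z => Psi0 γ x y z) a b c d - Psi0 a b c d

/-- Pointwise evaluation of the wedge (1-form) ∧ (1-form) on two vectors of ℝ⁸. -/
def wedge11W (f g : W8 → ℝ) (a b : W8) : ℝ := f a * g b - f b * g a


lemma det_fin_four' (M : Matrix (Fin 4) (Fin 4) ℝ) :
    M.det = M 0 0*M 1 1*M 2 2*M 3 3 - M 0 0*M 1 1*M 2 3*M 3 2 - M 0 0*M 1 2*M 2 1*M 3 3 + M 0 0*M 1 2*M 2 3*M 3 1 + M 0 0*M 1 3*M 2 1*M 3 2 - M 0 0*M 1 3*M 2 2*M 3 1 - M 0 1*M 1 0*M 2 2*M 3 3 + M 0 1*M 1 0*M 2 3*M 3 2 + M 0 1*M 1 2*M 2 0*M 3 3 - M 0 1*M 1 2*M 2 3*M 3 0 - M 0 1*M 1 3*M 2 0*M 3 2 + M 0 1*M 1 3*M 2 2*M 3 0 + M 0 2*M 1 0*M 2 1*M 3 3 - M 0 2*M 1 0*M 2 3*M 3 1 - M 0 2*M 1 1*M 2 0*M 3 3 + M 0 2*M 1 1*M 2 3*M 3 0 + M 0 2*M 1 3*M 2 0*M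 3 1 - M 0 2*M 1 3*M 2 1*M 3 0 - M 0 3*M 1 0*M 2 1*M 3 2 + M 0 3*M 1 0*M 2 2*M 3 1 + M 0 3*M 1 1*M 2 0*M 3 2 - M 0 3*M 1 1*M 2 2*M 3 0 - M 0 3*M 1 2*M 2 0*M 3 1 + M 0 3*M 1 2*M 2 1*M 3 0 := by
  rw [Matrix.det_succ_row_zero]
  simp [Fin.sum_univ_succ, Matrix.det_fin_three, Fin.succAbove,
    show (Fin.succ 2 : Fin 4) = 3 from rfl, show (Fin.castSucc 2 : Fin 4) = 2 from rfl,
    show ((1 : Fin 4) < 3) from by decide]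
  ring

lemma psi0_swap12 (a b c d : W8) : Psi0 b a c d = -Psi0 a b c d := by
  simp only [Psi0, e4, det_fin_four', Matrix.cons_val', Matrix.cons_val_zero,
    Matrix.cons_val_one, Matrix.head_cons, Matrix.empty_val', Matrix.cons_val_fin_one,
    Matrix.head_fin_const, Matrix.of_apply, Matrix.cons_val_two, Matrix.cons_val_three,
    Matrix.tail_cons]
  ring

lemma psi0_cyc (a b c d : W8) : Psi0 b c a d = Psi0 a b c d := by
  simp only [Psi0, e4, det_fin_four', Matrix.cons_val', Matrix.cons_val_zero,
    Matrix.cons_val_one, Matrix.head_cons, Matrix.empty_val', Matrix.cons_val_fin_one,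
    Matrix.head_fin_const, Matrix.of_apply, Matrix.cons_val_two, Matrix.cons_val_three,
    Matrix.tail_cons]
  ring

/-- Proposition 12(iii): for pairwise orthonormal α, β, γ in ℝ⁸ the 2-form identity
ι_γ(ι_αΨ₀) = ι_α(ι_γτ_β) + (ι_γι_βι_αΨ₀) ∧ β^# holds on ℝ⁸, i.e.
ω_{αγ} = α⌟Im Ω_{βγ} + (γ⌟ω_{αβ}) ∧ β^#. -/
theorem prop12_triality_symplectic
    (α β γ : W8) (hα : ‖α‖ = 1) (hβ : ‖β‖ = 1) (hγ : ‖γ‖ = 1)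
    (hαβ : ⟪α, β⟫ = (0 : ℝ)) (hαγ : ⟪α, γ⟫ = (0 : ℝ)) (hβγ : ⟪β, γ⟫ = (0 : ℝ))
    (u v : W8) :
    Psi0 α γ u v =
      tau β γ α u v + wedge11W (fun a => Psi0 α β γ a) (sharpW β) u v := by
  have hβα : ⟪β, α⟫ = (0:ℝ) := by rw [real_inner_comm]; exact hαβ
  simp only [tau, wedge13W, wedge11W, sharpW, hβγ, hβα]
  rw [psi0_swap12 γ α u v, psi0_cyc α β γ v, psi0_cyc α β γ u]
  ring
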